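/- arXiv:2509.25621 — 2 statements merged into one kernel-verified Lean document; each statement's English description precedes it below -/
import Mathlib

section
/- Assume β > 3 and α = 1/β. For every w ∈ L^{α,β}, the word w̃ obtained by applying the hat operation twice belongs to L^{α,β} and satisfies s(w̃) = ε (equivalently, k1(w̃) = k2(w̃) = 0). -/
open Filter Topology MeasureTheory ENNReal
open scoped Classical

noncomputable section

namespace AB

/-- The (α,β)-transformation `T(x) = βx + α − ⌊βx + α⌋`. -/
def T (α β : ℝ) (x : ℝ) : ℝ := β * x + α - ⌊β * x + α⌋

/-- `λ = ⌈α+β⌉ − 1`, as a natural number. -/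
def lamNat (α β : ℝ) : ℕ := (⌈α + β⌉ - 1).toNat

/-- The digit of `x ∈ [0,1)`: the index `k` with `x ∈ J_k`, namely `⌊βx + α⌋`. -/
def digit (α β : ℝ) (x : ℝ) : ℕ := (⌊β * x + α⌋).toNat

/-- The (α,β)-expansion of `x`. -/
def iSeq (α β : ℝ) (x : ℝ) : ℕ → ℕ := fun n => digit α β ((T α β)^[n] x)

/-- The one-sided (α,β)-shift: closure (in the product topology) of the set of expansions. -/
def Xab (α β : ℝ) : Set (ℕ → ℕ) :=
  closure {s | ∃ x ∈ Set.Ico (0 : ℝ) 1, s = iSeq α β x}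

/-- Word of given length read in a one-sided sequence starting at position `k`. -/
def wordN (s : ℕ → ℕ) (k len : ℕ) : List ℕ := (List.range len).map fun i => s (k + i)

/-- The language of the (α,β)-shift: finite words appearing in points of `Xab`. -/
def Lang (α β : ℝ) : Set (List ℕ) :=
  {w | ∃ s ∈ Xab α β, ∃ k : ℕ, w = wordN s k w.length}

/-- `a = i_{α,β}(0)`. -/
def aSeq (α β : ℝ) : ℕ → ℕ := iSeq α β 0

/-- The prefix of length `l` of a sequence, as a word. -/
def pre (s : ℕ → ℕ) (l : ℕ) : List ℕ := (List.range l).map s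

/-- Lexicographic (non-strict) order on words. -/
def wordLe (u v : List ℕ) : Prop := u = v ∨ List.Lex (· < ·) u v

/-- Lexicographic (non-strict) order on one-sided sequences. -/
def seqLe (x y : ℕ → ℕ) : Prop :=
  x = y ∨ ∃ n : ℕ, (∀ i < n, x i = y i) ∧ x n < y n

/-- The largest `k ≤ |w|` such that the length-`k` suffix of `w` equals the length-`k`
prefix of `s` (this is `k1` for `s = a` and `k2` for `s = b`). -/
def kk (s : ℕ → ℕ) (w : List ℕ) : ℕ :=
  Nat.findGreatest (fun k => w.drop (w.length - k) = pre s k) w.length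

/-- The set of finite prefixes of a sequence (`P^a`, `P^b`). -/
def Pset (s : ℕ → ℕ) : Set (List ℕ) := {u | ∃ l : ℕ, u = pre s l}

/-- The distinguished suffix `s(w)`. -/
def sWord (a b : ℕ → ℕ) (w : List ℕ) : List ℕ :=
  if kk b w < kk a w then w.drop (w.length - kk a w)
  else if kk a w < kk b w then w.drop (w.length - kk b w)
  else []

/-- The hat operation on `P = P^a ∪ P^b` (for `β > 3`, `α = 1/β`). -/
def hatP (a b : ℕ → ℕ) (lam : ℕ) (u : List ℕ) : List ℕ :=
  if u = [] then []
  else if u ∈ Pset a then u.dropLast ++ [u.getLast?.getD 0 + 1]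
  else if 3 ≤ u.getLast?.getD 0 then u.dropLast ++ [u.getLast?.getD 0 - 1]
  else
    (u.set (u.length - kk a u.dropLast - 2) (u.getD (u.length - kk a u.dropLast - 2) 0 - 1)).set
      (u.length - kk a u.dropLast - 1) (lam - 1)

/-- `ŵ` for `w = v·s(w)`: replace the distinguished suffix by its hat. -/
def hatW (a b : ℕ → ℕ) (lam : ℕ) (w : List ℕ) : List ℕ :=
  w.take (w.length - (sWord a b w).length) ++ hatP a b lam (sWord a b w)

/-- `w̃`: the hat operation applied twice. -/
def tildeW (a b : ℕ → ℕ) (lam : ℕ) (w : List ℕ) : List ℕ :=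
  hatW a b lam (hatW a b lam w)

/-- `z(u)` for `u ∈ P^b`. -/
def zP (a b : ℕ → ℕ) (u : List ℕ) : ℕ :=
  if u = [] then 0
  else sSup ({k : ℕ | (u ++ pre (fun i => a (kk a u + i)) k) ∈ Pset b} ∪ {0})

/-- `z(w)` for a word `w` in the language. -/
def zW (a b : ℕ → ℕ) (w : List ℕ) : ℕ :=
  if kk a w < kk b w then zP a b (w.drop (w.length - kk b w)) else 0

/-- `z̄(n) = max{z(u) : u prefix of b, |u| ≤ n}`. -/
def zbar (a b : ℕ → ℕ) (n : ℕ) : ℕ :=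
  (Finset.range (n + 1)).sup fun l => zP a b (pre b l)

/-- The natural extension `Σ^{α,β}`. -/
def SigmaAB (α β : ℝ) : Set (ℤ → ℕ) :=
  {x | ∀ k : ℤ, (fun n : ℕ => x (k + n)) ∈ Xab α β}

/-- `σ^j` on two-sided sequences. -/
def shiftI {A : Type*} (j : ℤ) (x : ℤ → A) : ℤ → A := fun n => x (n + j)

/-- Word of given length read in a two-sided sequence starting at position `k`. -/
def wordZ (x : ℤ → ℕ) (k : ℤ) (len : ℕ) : List ℕ := (List.range len).map fun i => x (k + i)

/-- The map `g : L^{α,β} → {0,1}`. -/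
def gW (a b : ℕ → ℕ) (w : List ℕ) : ℕ :=
  if kk a w = 0 ∧ 0 < kk b w ∧ b (kk b w) ≤ 1 then 0 else 1

/-- `w^♯`: the word `w` placed at positions `k,…,k+|w|−1`, followed by `g(w)` at
position `k+|w|`, and `1` at all other positions. -/
def wSharp (a b : ℕ → ℕ) (k : ℤ) (w : List ℕ) : ℤ → ℕ :=
  fun j => if k ≤ j ∧ j < k + w.length then w.getD (j - k).toNat 1
           else if j = k + w.length then gW a b w else 1

/-- The finite approximation sets `E^n ⊆ Σ^{α,β}`. -/
def En (α β : ℝ) (b : ℕ → ℕ) (n : ℕ) : Set (ℤ → ℕ) :=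
  {x | wordZ x (-(n : ℤ)) (2 * n + 1) ∈ Lang α β ∧
       x ((n : ℤ) + 1) = gW (aSeq α β) b (wordZ x (-(n : ℤ)) (2 * n + 1)) ∧
       ∀ j : ℤ, j < -(n : ℤ) ∨ (n : ℤ) + 1 < j → x j = 1}

/-- `s(x_k^-) = ε` for the left-infinite word `x_{(-∞,k-1]}`: no nonempty suffix of it is a
prefix of `a` or of `b`. -/
def leftStar (a b : ℕ → ℕ) (x : ℤ → ℕ) (k : ℤ) : Prop :=
  (∀ K : ℕ, 1 ≤ K → ¬ ∀ i : ℕ, i < K → x (k - K + i) = a i) ∧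
  (∀ K : ℕ, 1 ≤ K → ¬ ∀ i : ℕ, i < K → x (k - K + i) = b i)

/-- `E^n_{[k,l]}(v)`. -/
def EnCyl (α β : ℝ) (b : ℕ → ℕ) (n : ℕ) (k l : ℤ) (v : List ℕ) : Set (ℤ → ℕ) :=
  {x ∈ En α β b n | wordZ x k (l - k + 1).toNat = v}

/-- `E^{*,n}_{[k,l]}(v)`. -/
def EnCylStar (α β : ℝ) (b : ℕ → ℕ) (n : ℕ) (k l : ℤ) (v : List ℕ) : Set (ℤ → ℕ) :=
  {x ∈ EnCyl α β b n k l v | leftStar (aSeq α β) b x k}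

/-- The Birkhoff sum `∑_{j=−n}^{n} φ(σ^j x)`. -/
def birkhoff (φ : (ℤ → ℕ) → ℝ) (n : ℕ) (x : ℤ → ℕ) : ℝ :=
  ∑ j ∈ Finset.Icc (-(n : ℤ)) (n : ℤ), φ (shiftI j x)

/-- `Ξ^n_{[k,l]}(v)`. -/
def Xi (α β : ℝ) (b : ℕ → ℕ) (φ : (ℤ → ℕ) → ℝ) (n : ℕ) (k l : ℤ) (v : List ℕ) : ℝ :=
  ∑' x : (EnCyl α β b n k l v), Real.exp (birkhoff φ n x.1)

/-- `Ξ^{*,n}_{[k,l]}(v)`. -/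
def XiStar (α β : ℝ) (b : ℕ → ℕ) (φ : (ℤ → ℕ) → ℝ) (n : ℕ) (k l : ℤ) (v : List ℕ) : ℝ :=
  ∑' x : (EnCylStar α β b n k l v), Real.exp (birkhoff φ n x.1)

/-- `δ_i(f)`, as an extended nonnegative real. -/
def oscE {A : Type*} (f : (ℤ → A) → ℝ) (i : ℤ) : ℝ≥0∞ :=
  ⨆ (x : ℤ → A) (y : ℤ → A) (_ : ∀ k : ℤ, k ≠ i → x k = y k), ENNReal.ofReal |f x - f y|

/-- `‖f‖_δ` for a function on the full shift. -/
def enormFull {A : Type*} (f : (ℤ → A) → ℝ) : ℝ≥0∞ := ∑' i : ℤ, oscE f i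

/-- `‖f‖_δ` for a function on a subshift `X`: infimum over continuous extensions. -/
def enormOn {A : Type*} [TopologicalSpace A] (X : Set (ℤ → A)) (f : (ℤ → A) → ℝ) : ℝ≥0∞ :=
  ⨅ (g : (ℤ → A) → ℝ) (_ : Continuous g) (_ : ∀ x ∈ X, g x = f x), enormFull g

/-- `f` has bounded total oscillations on `X` (i.e. `f ∈ B(X)`). -/
def BTO {A : Type*} [TopologicalSpace A] (X : Set (ℤ → A)) (f : (ℤ → A) → ℝ) : Prop :=
  ContinuousOn f X ∧ enormOn X f ≠ ⊤

/-- The real value of `‖f‖_δ`. -/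
def dnorm {A : Type*} [TopologicalSpace A] (X : Set (ℤ → A)) (f : (ℤ → A) → ℝ) : ℝ :=
  (enormOn X f).toReal

/-- The pressure `p(φ)`. -/
def pressure (α β : ℝ) (b : ℕ → ℕ) (φ : (ℤ → ℕ) → ℝ) : ℝ :=
  limUnder atTop fun n : ℕ =>
    Real.log (∑' x : (En α β b n), Real.exp (birkhoff φ n x.1)) / (2 * n + 1)

/-- `ν` is a tangent functional to the pressure at `φ` (an equilibrium measure for `φ`). -/
def IsTangent (α β : ℝ) (b : ℕ → ℕ) (φ : (ℤ → ℕ) → ℝ) (ν : Measure (ℤ → ℕ)) : Prop :=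
  ∀ f : (ℤ → ℕ) → ℝ, ContinuousOn f (SigmaAB α β) →
    pressure α β b φ + ∫ x, f x ∂ν ≤ pressure α β b (fun x => φ x + f x)

/-- The cylinder `[x_1 … x_m]` in `Σ^{α,β}`. -/
def cyl (α β : ℝ) (x : ℤ → ℕ) (m : ℕ) : Set (ℤ → ℕ) :=
  {y ∈ SigmaAB α β | ∀ i : ℕ, 1 ≤ i → i ≤ m → y (i : ℤ) = x (i : ℤ)}

/-- `ν` is a weak Gibbs measure for `ψ` on `Σ^{α,β}`. -/
def WeakGibbs (α β : ℝ) (ν : Measure (ℤ → ℕ)) (ψ : (ℤ → ℕ) → ℝ) : Prop :=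
  ∀ δ : ℝ, 0 < δ → ∃ N : ℕ, ∀ m : ℕ, N ≤ m → ∀ x ∈ SigmaAB α β,
    |Real.log (ν (cyl α β x m)).toReal / m -
      (∑ l ∈ Finset.Icc (1 : ℤ) (m : ℤ), ψ (shiftI l x)) / m| ≤ δ


/-- Concatenation `w·x` of a word and a one-sided sequence. -/
def wordApp (w : List ℕ) (x : ℕ → ℕ) : ℕ → ℕ :=
  fun n => if n < w.length then w.getD n 1 else x (n - w.length)

/-- `σ^k` on one-sided sequences. -/
def shiftN (k : ℕ) (s : ℕ → ℕ) : ℕ → ℕ := fun n => s (k + n)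

end AB

/-!
For `α = 1/β` the expansion of `0` is `a = 0111…`, and `L^{α,β}` is exactly the set of admissible
words: a `0` never follows a suffix `01…1` (this is `σⁿx ≥ a`), and after a suffix `b₀…b_{k-1}`
of `b` the next letter is at most `b k` (this is `σⁿx ≤ b`). Necessity compares an orbit with the
left limits `leftOrbit n = lim_{x↑1} Tⁿx`, whose digits are `b`; sufficiency shows by induction on
`w` that `T^{|w|}` maps the cylinder of an admissible `w` onto an explicit nonempty interval.

The hat is then analysed on admissible words. If `s(w)` is a prefix of `a`, the hat raises the last
letter (`0 ↦ 1` or `1 ↦ 2`): the word stays admissible and has no `a`-suffix. If `s(w)` is a prefix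
of `b`, the hat lowers one letter `c` to `c - 1`; admissibility at `c` forbids every `b`-prefix from
ending in `c - 1`, and the letters after it lie strictly between `0` and `b 0`, so the result is
admissible with `s = ε`. Hence `ŵ` either has `s(ŵ) = ε` already, or ends in a `b`-prefix whose
last letter is at most `2`, and then `s(w̃) = ε`.
-/

namespace AB

section Words

variable {s r : ℕ → ℕ} {u v t : List ℕ} {d j k m n : ℕ}

@[simp] lemma length_pre (s : ℕ → ℕ) (n : ℕ) : (pre s n).length = n := by simp [pre]

@[simp] lemma pre_zero (s : ℕ → ℕ) : pre s 0 = [] := rfl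

lemma pre_add (s : ℕ → ℕ) (m n : ℕ) :
    pre s (m + n) = pre s m ++ pre (fun i => s (m + i)) n := by
  simp [pre, List.range_add]

lemma pre_succ (s : ℕ → ℕ) (n : ℕ) : pre s (n + 1) = pre s n ++ [s n] := by
  rw [pre_add]; simp [pre]

lemma mem_pre : d ∈ pre s n ↔ ∃ i < n, s i = d := by simp [pre]

lemma pre_inj : pre s n = pre r n ↔ ∀ i < n, s i = r i := by
  simp [pre, List.map_inj_left]

lemma take_pre (h : m ≤ n) : (pre s n).take m = pre s m := by
  simp [pre, ← List.map_take, List.take_range, min_eq_left h]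

lemma pre_prefix_pre (h : m ≤ n) : pre s m <+: pre s n :=
  take_pre (s := s) h ▸ List.take_prefix _ _

lemma drop_pre (h : j ≤ n) : (pre s n).drop j = pre (fun i => s (j + i)) (n - j) := by
  conv_lhs => rw [← Nat.add_sub_cancel' h, pre_add]
  exact List.drop_left' (length_pre s j)

lemma suffix_append_iff_of_length_eq (h : t.length = v.length) : t <:+ u ++ v ↔ t = v := by
  simpa using List.suffix_append_inj_of_length_eq (l₁ := []) (l₂ := u) h

lemma pre_suffix_pre_iff :
    pre s k <:+ pre r n ↔ k ≤ n ∧ ∀ i < k, r (n - k + i) = s i := by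
  constructor
  · intro h
    have hk : k ≤ n := by simpa using h.length_le
    rw [← Nat.sub_add_cancel hk, pre_add, suffix_append_iff_of_length_eq (by simp)] at h
    exact ⟨hk, fun i hi => (pre_inj.mp h i hi).symm⟩
  · rintro ⟨hk, h⟩
    rw [← Nat.sub_add_cancel hk, pre_add, suffix_append_iff_of_length_eq (by simp), pre_inj]
    exact fun i hi => (h i hi).symm

lemma pre_succ_suffix_snoc_iff : pre s (k + 1) <:+ u ++ [d] ↔ pre s k <:+ u ∧ d = s k := by
  rw [pre_succ, List.suffix_append_inj_of_length_eq (s₁ := [s k]) (s₂ := [d]) rfl]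
  simp [eq_comm]

end Words

section Borders

variable {s : ℕ → ℕ} {u t : List ℕ} {d k : ℕ}

lemma pre_suffix_iff_drop_eq :
    pre s k <:+ u ↔ k ≤ u.length ∧ u.drop (u.length - k) = pre s k := by
  refine ⟨fun h => ⟨by simpa using h.length_le, ?_⟩, fun h => h.2 ▸ List.drop_suffix _ _⟩
  simpa using (List.suffix_iff_eq_drop.mp h).symm

lemma pre_kk_suffix (s : ℕ → ℕ) (u : List ℕ) : pre s (kk s u) <:+ u :=
  pre_suffix_iff_drop_eq.mpr ⟨Nat.findGreatest_le _,
    Nat.findGreatest_spec (P := fun k => u.drop (u.length - k) = pre s k) (Nat.zero_le _)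
      (by simp)⟩

lemma le_kk (h : pre s k <:+ u) : k ≤ kk s u :=
  Nat.le_findGreatest (pre_suffix_iff_drop_eq.mp h).1 (pre_suffix_iff_drop_eq.mp h).2

lemma kk_eq_zero_iff : kk s u = 0 ↔ ∀ k, 0 < k → ¬ pre s k <:+ u :=
  ⟨fun h0 k hk h => by have := le_kk h; omega,
    fun h => by by_contra h0; exact h _ (Nat.pos_of_ne_zero h0) (pre_kk_suffix s u)⟩

lemma kk_snoc_eq_zero (h : kk s u = 0) (hd : d ≠ s 0) : kk s (u ++ [d]) = 0 := by
  refine kk_eq_zero_iff.mpr fun k hk hsuf => ?_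
  obtain ⟨k, rfl⟩ := Nat.exists_eq_add_of_lt hk
  rw [zero_add, pre_succ_suffix_snoc_iff] at hsuf
  rcases Nat.eq_zero_or_pos k with rfl | hk
  · exact hd hsuf.2
  · exact kk_eq_zero_iff.mp h k hk hsuf.1

lemma kk_append_eq_zero (h : kk s u = 0) (ht : ∀ d ∈ t, d ≠ s 0) : kk s (u ++ t) = 0 := by
  induction t using List.reverseRecOn with
  | nil => simpa using h
  | append_singleton t d ih =>
    rw [← List.append_assoc]
    exact kk_snoc_eq_zero (ih fun e he => ht e (by simp [he])) (ht d (by simp))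

end Borders

def zeroOnes (n : ℕ) : ℕ := if n = 0 then 0 else 1

section ZeroOnes

variable {b : ℕ → ℕ} {u v : List ℕ} {d j : ℕ}

lemma zeroOnes_le_one (n : ℕ) : zeroOnes n ≤ 1 := by
  unfold zeroOnes; split_ifs <;> simp

lemma kk_zeroOnes_snoc_zero_ne_zero (u : List ℕ) : kk zeroOnes (u ++ [0]) ≠ 0 := by
  have := le_kk (pre_succ_suffix_snoc_iff.mpr ⟨List.nil_suffix, rfl⟩ :
    pre zeroOnes (0 + 1) <:+ u ++ [0])
  omega

lemma kk_zeroOnes_snoc_of_two_le (hd : 2 ≤ d) : kk zeroOnes (u ++ [d]) = 0 := by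
  refine kk_eq_zero_iff.mpr fun k hk hsuf => ?_
  obtain ⟨k, rfl⟩ := Nat.exists_eq_add_of_lt hk
  rw [zero_add, pre_succ_suffix_snoc_iff] at hsuf
  have := zeroOnes_le_one k
  omega

lemma kk_zeroOnes_snoc_one_pos (h : 0 < kk zeroOnes u) : 0 < kk zeroOnes (u ++ [1]) := by
  have := le_kk (pre_succ_suffix_snoc_iff.mpr ⟨pre_kk_suffix _ _, by simp [zeroOnes, h.ne']⟩ :
    pre zeroOnes (kk zeroOnes u + 1) <:+ u ++ [1])
  omega

lemma eq_zero_of_pre_suffix_pre_zeroOnes (hb : 2 ≤ b 0) {k : ℕ}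
    (h : pre b j <:+ pre zeroOnes k) : j = 0 := by
  by_contra hj
  obtain ⟨i, -, hi⟩ := mem_pre.mp (h.mem (mem_pre.mpr ⟨0, Nat.pos_of_ne_zero hj, rfl⟩))
  have := zeroOnes_le_one i
  omega

lemma kk_zeroOnes_append_pre_eq_zero (hb : 2 ≤ b 0) (hj : 0 < j)
    (h : kk zeroOnes (pre b j) = 0) : kk zeroOnes (v ++ pre b j) = 0 := by
  refine kk_eq_zero_iff.mpr fun k hk hsuf => ?_
  rcases le_total k j with hkj | hjk
  · exact kk_eq_zero_iff.mp h k hk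
      (List.suffix_of_suffix_length_le hsuf (List.suffix_append _ _) (by simpa))
  · have := eq_zero_of_pre_suffix_pre_zeroOnes hb
      (List.suffix_of_suffix_length_le (List.suffix_append _ _) hsuf (by simpa))
    omega

end ZeroOnes

def Admissible (b : ℕ → ℕ) (w : List ℕ) : Prop :=
  ∀ u d, u ++ [d] <+: w → (d = 0 → kk zeroOnes u = 0) ∧ ∀ k, pre b k <:+ u → d ≤ b k

section Admissible

variable {b : ℕ → ℕ} {u v w : List ℕ} {d : ℕ}

lemma Admissible.of_prefix (h : Admissible b w) (hv : v <+: w) : Admissible b v :=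
  fun u d hu => h u d (hu.trans hv)

lemma admissible_snoc_iff : Admissible b (u ++ [d]) ↔
    Admissible b u ∧ (d = 0 → kk zeroOnes u = 0) ∧ ∀ k, pre b k <:+ u → d ≤ b k := by
  refine ⟨fun h => ⟨h.of_prefix (List.prefix_append _ _), h u d (List.prefix_refl _)⟩, ?_⟩
  rintro ⟨hu, hd⟩ u' d' h'
  rcases List.prefix_concat_iff.mp h' with h' | h'
  · obtain ⟨rfl, h'⟩ := List.append_inj' h' rfl
    obtain rfl : d' = d := by simpa using h'
    exact hd
  · exact hu u' d' h'

end Admissible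

section Hat

variable {a b : ℕ → ℕ} {lam : ℕ} {w : List ℕ} {m n : ℕ}

lemma sWord_suffix (a b : ℕ → ℕ) (w : List ℕ) : sWord a b w <:+ w := by
  unfold sWord
  split_ifs <;> simp [List.drop_suffix]

lemma exists_eq_append_sWord (a b : ℕ → ℕ) (lam : ℕ) (w : List ℕ) : ∃ v,
    w = v ++ sWord a b w ∧ hatW a b lam w = v ++ hatP a b lam (sWord a b w) := by
  refine ⟨_, ?_, rfl⟩
  conv_lhs => rw [← List.take_append_drop (w.length - (sWord a b w).length) w]
  rw [← List.suffix_iff_eq_drop.mp (sWord_suffix a b w)]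

lemma sWord_eq_pre_a (h : kk b w < kk a w) : sWord a b w = pre a (kk a w) := by
  rw [sWord, if_pos h]
  exact (pre_suffix_iff_drop_eq.mp (pre_kk_suffix a w)).2

lemma sWord_eq_pre_b (h : kk a w < kk b w) : sWord a b w = pre b (kk b w) := by
  rw [sWord, if_neg (by omega), if_pos h]
  exact (pre_suffix_iff_drop_eq.mp (pre_kk_suffix b w)).2

lemma sWord_eq_nil (ha : kk a w = 0) (hb : kk b w = 0) : sWord a b w = [] := by
  simp [sWord, ha, hb]

lemma hatW_eq_self (ha : kk a w = 0) (hb : kk b w = 0) : hatW a b lam w = w := by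
  simp [hatW, sWord_eq_nil ha hb, hatP]

lemma hatP_pre_a_succ : hatP a b lam (pre a (n + 1)) = pre a n ++ [a n + 1] := by
  rw [hatP, if_neg (by simp [← List.length_eq_zero_iff]), if_pos ⟨n + 1, rfl⟩, pre_succ]
  simp

lemma pre_succ_not_mem_Pset (hab : b 0 ≠ a 0) : pre b (m + 1) ∉ Pset a := by
  rintro ⟨l, h⟩
  obtain rfl : m + 1 = l := by simpa using congrArg List.length h
  exact hab (pre_inj.mp h 0 (Nat.succ_pos m))

lemma hatP_pre_b_succ_of_three_le (hab : b 0 ≠ a 0) (h3 : 3 ≤ b m) :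
    hatP a b lam (pre b (m + 1)) = pre b m ++ [b m - 1] := by
  rw [hatP, if_neg (by simp [← List.length_eq_zero_iff]), if_neg (pre_succ_not_mem_Pset hab),
    pre_succ]
  simp [h3]

lemma hatP_pre_b_succ_of_lt_three (hab : b 0 ≠ a 0) (h3 : b m < 3)
    (hn : n + 1 + kk a (pre b m) = m) :
    hatP a b lam (pre b (m + 1)) =
      pre b n ++ (b n - 1) :: (lam - 1) :: (pre b (m + 1)).drop (n + 2) := by
  rw [hatP, if_neg (by simp [← List.length_eq_zero_iff]), if_neg (pre_succ_not_mem_Pset hab)]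
  have hlast : (pre b (m + 1)).getLast?.getD 0 = b m := by simp [pre_succ]
  have hdrop : (pre b (m + 1)).dropLast = pre b m := by simp [pre_succ]
  rw [hlast, if_neg (by omega), hdrop, length_pre,
    show m + 1 - kk a (pre b m) - 2 = n by omega, show m + 1 - kk a (pre b m) - 1 = n + 1 by omega]
  rw [List.set_eq_take_append_cons_drop, if_pos (by simp only [List.length_set, length_pre]; omega),
    List.set_eq_take_append_cons_drop]
  have hget : (pre b (m + 1)).getD n 0 = b n := by
    simp [pre, List.getElem?_range (show n < m + 1 by omega)]
  rw [if_pos (by simp only [length_pre]; omega), take_pre (show n ≤ m + 1 by omega), hget]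
  simp [List.take_append, List.drop_append, List.take_of_length_le,
    show n + 1 + 1 - n = 1 + 1 by omega, show n ≤ n + 1 + 1 by omega]

end Hat

section Cases

variable {b : ℕ → ℕ} {u t : List ℕ} {c d : ℕ}

lemma admissible_snoc_pred (h : Admissible b (u ++ [c]))
    (hc : c - 1 = 0 → kk zeroOnes u = 0) : Admissible b (u ++ [c - 1]) := by
  obtain ⟨hu, -, hle⟩ := admissible_snoc_iff.mp h
  exact admissible_snoc_iff.mpr ⟨hu, hc, fun k hk => (Nat.sub_le c 1).trans (hle k hk)⟩

lemma kk_snoc_pred_eq_zero (h : Admissible b (u ++ [c])) (hc : 0 < c) :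
    kk b (u ++ [c - 1]) = 0 := by
  refine kk_eq_zero_iff.mpr fun k hk hsuf => ?_
  obtain ⟨k, rfl⟩ := Nat.exists_eq_add_of_lt hk
  rw [zero_add, pre_succ_suffix_snoc_iff] at hsuf
  have := (admissible_snoc_iff.mp h).2.2 k hsuf.1
  omega

lemma admissible_snoc_succ (h : Admissible b (u ++ [d]))
    (hd : ∀ k, pre b k <:+ u → d ≠ b k) : Admissible b (u ++ [d + 1]) := by
  obtain ⟨hu, -, hle⟩ := admissible_snoc_iff.mp h
  refine admissible_snoc_iff.mpr ⟨hu, by omega, fun k hk => ?_⟩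
  have := hle k hk
  have := hd k hk
  omega

lemma admissible_append_of_kk_eq_zero (hu : Admissible b u) (hk : kk b u = 0)
    (ht : ∀ d ∈ t, 0 < d ∧ d < b 0) : Admissible b (u ++ t) ∧ kk b (u ++ t) = 0 := by
  induction t using List.reverseRecOn with
  | nil => simpa using ⟨hu, hk⟩
  | append_singleton t d ih =>
    obtain ⟨ihu, ihk⟩ := ih fun e he => ht e (by simp [he])
    obtain ⟨hd0, hdb⟩ := ht d (by simp)
    rw [← List.append_assoc]
    refine ⟨admissible_snoc_iff.mpr ⟨ihu, by omega, fun k hsuf => ?_⟩,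
      kk_snoc_eq_zero ihk hdb.ne⟩
    obtain rfl : k = 0 := by have := le_kk hsuf; omega
    exact hdb.le

lemma admissible_snoc_pred_append (hb0 : 3 ≤ b 0) (h : Admissible b (u ++ [c]))
    (ha : kk zeroOnes (u ++ [c]) = 0) (ht : ∀ d ∈ t, 0 < d ∧ d < 3) :
    Admissible b (u ++ [c - 1] ++ (b 0 - 1) :: t) ∧
      kk zeroOnes (u ++ [c - 1] ++ (b 0 - 1) :: t) = 0 ∧
      kk b (u ++ [c - 1] ++ (b 0 - 1) :: t) = 0 := by
  have hc : 0 < c := Nat.pos_of_ne_zero fun h0 => kk_zeroOnes_snoc_zero_ne_zero u (h0 ▸ ha)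
  have hu : c - 1 = 0 → kk zeroOnes u = 0 := fun h1 => by
    by_contra hu
    have := kk_zeroOnes_snoc_one_pos (Nat.pos_of_ne_zero hu)
    rw [show c = 1 by omega] at ha
    omega
  have ht' : ∀ d ∈ (b 0 - 1) :: t, 0 < d ∧ d < b 0 := by
    intro d hd
    rcases List.mem_cons.mp hd with rfl | hd
    · omega
    · have := ht d hd; omega
  obtain ⟨hadm, hkb⟩ := admissible_append_of_kk_eq_zero (admissible_snoc_pred h hu)
    (kk_snoc_pred_eq_zero h hc) ht'
  refine ⟨hadm, ?_, hkb⟩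
  simpa using kk_append_eq_zero (kk_zeroOnes_snoc_of_two_le (u := u ++ [c - 1]) (d := b 0 - 1)
    (by omega)) fun d hd => (ht d hd).1.ne'

end Cases

section PrefixesOfB

variable {b : ℕ → ℕ} {d m : ℕ}

lemma kk_zeroOnes_pre_lt (hb : b 0 ≠ 0) (hm : 0 < m) : kk zeroOnes (pre b m) < m := by
  obtain ⟨hle, hb'⟩ := pre_suffix_pre_iff.mp (pre_kk_suffix zeroOnes (pre b m))
  refine lt_of_le_of_ne hle fun heq => hb ?_
  simpa [heq, zeroOnes] using hb' 0 (by omega)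

lemma kk_zeroOnes_pre_sub_eq_zero (hpre : ∀ n, Admissible b (pre b n)) :
    kk zeroOnes (pre b (m - kk zeroOnes (pre b m))) = 0 := by
  obtain ⟨-, hb⟩ := pre_suffix_pre_iff.mp (pre_kk_suffix zeroOnes (pre b m))
  rcases Nat.eq_zero_or_pos (kk zeroOnes (pre b m)) with hg | hg
  · rwa [hg, Nat.sub_zero]
  · have h0 : b (m - kk zeroOnes (pre b m)) = 0 := by simpa [zeroOnes] using hb 0 hg
    have := hpre (m - kk zeroOnes (pre b m) + 1)
    rw [pre_succ, h0] at this
    exact (admissible_snoc_iff.mp this).2.1 rfl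

lemma pos_lt_three_of_mem_drop_pre_succ (hpre : ∀ n, Admissible b (pre b n)) (h3 : b m < 3)
    (hd : d ∈ (pre b (m + 1)).drop (m + 1 - kk zeroOnes (pre b m))) : 0 < d ∧ d < 3 := by
  obtain ⟨hgm, hb⟩ := pre_suffix_pre_iff.mp (pre_kk_suffix zeroOnes (pre b m))
  rw [drop_pre (Nat.sub_le _ _), mem_pre] at hd
  obtain ⟨i, hi, rfl⟩ := hd
  rcases Nat.lt_or_ge (i + 1) (kk zeroOnes (pre b m)) with hi' | hi'
  · have := hb (i + 1) hi'
    rw [show m - kk zeroOnes (pre b m) + (i + 1) = m + 1 - kk zeroOnes (pre b m) + i by omega]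
      at this
    simp [this, zeroOnes]
  · rw [show m + 1 - kk zeroOnes (pre b m) + i = m by omega]
    refine ⟨Nat.pos_of_ne_zero fun h0 => ?_, h3⟩
    have := hpre (m + 1)
    rw [pre_succ, h0] at this
    have := (admissible_snoc_iff.mp this).2.1 rfl
    omega

end PrefixesOfB

section HatCases

variable {b : ℕ → ℕ} {lam : ℕ} {w : List ℕ}

lemma hatW_of_suffix_a (hb0 : 2 ≤ b 0) (hw : Admissible b w) (h : kk b w < kk zeroOnes w) :
    Admissible b (hatW zeroOnes b lam w) ∧ kk zeroOnes (hatW zeroOnes b lam w) = 0 := by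
  obtain ⟨v, hwv, hhat⟩ := exists_eq_append_sWord zeroOnes b lam w
  obtain ⟨n, hn⟩ : ∃ n, kk zeroOnes w = n + 1 := Nat.exists_eq_succ_of_ne_zero (by omega)
  rw [sWord_eq_pre_a h, hn] at hwv hhat
  rw [hatP_pre_a_succ, ← List.append_assoc] at hhat
  rw [pre_succ, ← List.append_assoc] at hwv
  rw [hhat]
  subst hwv
  constructor
  · refine admissible_snoc_succ hw fun k hk heq => ?_
    -- `w` would end in a `b`-prefix lying inside its `a`-suffix, impossible as `b 0 ≥ 2`
    have hsuf := pre_succ_suffix_snoc_iff.mpr ⟨hk, heq⟩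
    have hlt : k + 1 ≤ n + 1 := by have := le_kk hsuf; omega
    have := eq_zero_of_pre_suffix_pre_zeroOnes hb0 <| List.suffix_of_suffix_length_le hsuf
      (hn ▸ pre_kk_suffix zeroOnes _) (by simp only [length_pre]; omega)
    omega
  · rcases n with _ | n
    · exact kk_snoc_eq_zero ((admissible_snoc_iff.mp hw).2.1 rfl) one_ne_zero
    · exact kk_zeroOnes_snoc_of_two_le (by simp [zeroOnes])

lemma hatW_of_suffix_b_of_three_le (hb0 : 0 < b 0) (hw : Admissible b w)
    (h : kk zeroOnes w < kk b w) (h3 : 3 ≤ b (kk b w - 1)) :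
    Admissible b (hatW zeroOnes b lam w) ∧ kk zeroOnes (hatW zeroOnes b lam w) = 0 ∧
      kk b (hatW zeroOnes b lam w) = 0 := by
  obtain ⟨v, hwv, hhat⟩ := exists_eq_append_sWord zeroOnes b lam w
  obtain ⟨m, hm⟩ : ∃ m, kk b w = m + 1 := Nat.exists_eq_succ_of_ne_zero (by omega)
  rw [hm, Nat.add_sub_cancel] at h3
  rw [sWord_eq_pre_b h, hm] at hwv hhat
  rw [hatP_pre_b_succ_of_three_le (by rw [zeroOnes, if_pos rfl]; omega) h3, ← List.append_assoc] at hhat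
  rw [pre_succ, ← List.append_assoc] at hwv
  rw [hhat]
  subst hwv
  exact ⟨admissible_snoc_pred hw (by omega), kk_zeroOnes_snoc_of_two_le (by omega),
    kk_snoc_pred_eq_zero hw (by omega)⟩

lemma hatW_of_suffix_b_of_lt_three (hb0 : 3 ≤ b 0) (hpre : ∀ n, Admissible b (pre b n))
    (hw : Admissible b w) (h : kk zeroOnes w < kk b w) (h3 : b (kk b w - 1) < 3) :
    Admissible b (hatW zeroOnes b (b 0) w) ∧ kk zeroOnes (hatW zeroOnes b (b 0) w) = 0 ∧
      kk b (hatW zeroOnes b (b 0) w) = 0 := by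
  obtain ⟨v, hwv, hhat⟩ := exists_eq_append_sWord zeroOnes b (b 0) w
  obtain ⟨m, hm⟩ : ∃ m, kk b w = m + 1 := Nat.exists_eq_succ_of_ne_zero (by omega)
  rw [hm, Nat.add_sub_cancel] at h3
  rw [sWord_eq_pre_b h, hm] at hwv hhat
  have hg : kk zeroOnes (pre b m) < m :=
    kk_zeroOnes_pre_lt (by omega) (Nat.pos_of_ne_zero fun h0 => by subst h0; omega)
  obtain ⟨n, hn⟩ : ∃ n, n + 1 + kk zeroOnes (pre b m) = m :=
    ⟨m - kk zeroOnes (pre b m) - 1, by omega⟩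
  rw [hatP_pre_b_succ_of_lt_three (by rw [zeroOnes, if_pos rfl]; omega) h3 hn] at hhat
  have hprefix : v ++ pre b (n + 1) <+: w := by
    rw [hwv, List.prefix_append_right_inj]
    exact pre_prefix_pre (by omega)
  have ha : kk zeroOnes (v ++ pre b (n + 1)) = 0 := by
    refine kk_zeroOnes_append_pre_eq_zero (by omega) (Nat.succ_pos n) ?_
    simpa [show m - kk zeroOnes (pre b m) = n + 1 by omega] using
      kk_zeroOnes_pre_sub_eq_zero (m := m) hpre
  rw [pre_succ, ← List.append_assoc] at hprefix ha
  have := admissible_snoc_pred_append hb0 (hw.of_prefix hprefix) ha fun d hd =>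
    pos_lt_three_of_mem_drop_pre_succ hpre h3
      (by rwa [show m + 1 - kk zeroOnes (pre b m) = n + 2 by omega])
  simpa [hhat] using this

lemma kk_b_eq_zero_of_kk_eq (hb0 : 2 ≤ b 0) (h : kk zeroOnes w = kk b w) : kk b w = 0 :=
  eq_zero_of_pre_suffix_pre_zeroOnes hb0 <| List.suffix_of_suffix_length_le
    (pre_kk_suffix b w) (pre_kk_suffix zeroOnes w) (by simp [h])

lemma hatW_of_not_suffix_a (hb0 : 3 ≤ b 0) (hpre : ∀ n, Admissible b (pre b n))
    (hw : Admissible b w) (h : ¬ kk b w < kk zeroOnes w) :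
    Admissible b (hatW zeroOnes b (b 0) w) ∧ kk zeroOnes (hatW zeroOnes b (b 0) w) = 0 ∧
      kk b (hatW zeroOnes b (b 0) w) = 0 := by
  rcases (not_lt.mp h).lt_or_eq with hlt | heq
  · rcases lt_or_ge (b (kk b w - 1)) 3 with h3 | h3
    · exact hatW_of_suffix_b_of_lt_three hb0 hpre hw hlt h3
    · exact hatW_of_suffix_b_of_three_le (by omega) hw hlt h3
  · have hkb := kk_b_eq_zero_of_kk_eq (by omega) heq
    rw [hatW_eq_self (heq.trans hkb) hkb]
    exact ⟨hw, heq.trans hkb, hkb⟩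

theorem tildeW_of_admissible (hb0 : 3 ≤ b 0) (hpre : ∀ n, Admissible b (pre b n))
    (hw : Admissible b w) :
    Admissible b (tildeW zeroOnes b (b 0) w) ∧ kk zeroOnes (tildeW zeroOnes b (b 0) w) = 0 ∧
      kk b (tildeW zeroOnes b (b 0) w) = 0 := by
  by_cases h : kk b w < kk zeroOnes w
  · obtain ⟨hadm, hka⟩ := hatW_of_suffix_a (lam := b 0) (by omega) hw h
    exact hatW_of_not_suffix_a hb0 hpre hadm (by omega)
  · obtain ⟨hadm, hka, hkb⟩ := hatW_of_not_suffix_a hb0 hpre hw h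
    rw [tildeW, hatW_eq_self hka hkb]
    exact ⟨hadm, hka, hkb⟩

end HatCases

section Expansions

variable {α β : ℝ} {x : ℝ} {w : List ℕ}

lemma T_mem_Ico (x : ℝ) : T α β x ∈ Set.Ico (0 : ℝ) 1 :=
  ⟨Int.fract_nonneg _, Int.fract_lt_one _⟩

lemma iterate_T_mem_Ico (hx : x ∈ Set.Ico (0 : ℝ) 1) :
    ∀ n, (T α β)^[n] x ∈ Set.Ico (0 : ℝ) 1
  | 0 => hx
  | n + 1 => by rw [Function.iterate_succ_apply']; exact T_mem_Ico _

lemma iSeq_add (x : ℝ) (k i : ℕ) : iSeq α β x (k + i) = iSeq α β ((T α β)^[k] x) i := by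
  simp [iSeq, Nat.add_comm k i, Function.iterate_add_apply]

lemma mem_Lang_iff :
    w ∈ Lang α β ↔ ∃ x ∈ Set.Ico (0 : ℝ) 1, pre (iSeq α β x) w.length = w := by
  constructor
  · rintro ⟨s, hs, k, hw⟩
    set U := ⋂ i ∈ Finset.range w.length, (fun t : ℕ → ℕ => t (k + i)) ⁻¹' {s (k + i)}
    have hU : IsOpen U := isOpen_biInter_finset fun i _ =>
      (isOpen_discrete _).preimage (continuous_apply _)
    obtain ⟨_, htU, x, hx, rfl⟩ :=
      _root_.mem_closure_iff.mp hs U hU (Set.mem_iInter₂.mpr fun i _ => rfl)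
    refine ⟨(T α β)^[k] x, iterate_T_mem_Ico hx k, ?_⟩
    rw [hw, wordN, pre, List.length_map, List.length_range]
    refine List.map_congr_left fun i hi => ?_
    rw [← iSeq_add]
    simpa using Set.mem_iInter₂.mp htU i (by simpa using hi)
  · rintro ⟨x, hx, hw⟩
    refine ⟨iSeq α β x, subset_closure ⟨x, hx, rfl⟩, 0, ?_⟩
    simpa [wordN, pre] using hw.symm

end Expansions

def leftDigit (α β y : ℝ) : ℤ := ⌈β * y + α⌉ - 1

def leftT (α β y : ℝ) : ℝ := β * y + α - leftDigit α β y

def leftOrbit (α β : ℝ) (n : ℕ) : ℝ := (leftT α β)^[n] 1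

section LeftOrbit

variable {α β : ℝ} {b : ℕ → ℕ}

lemma leftDigit_lt (y : ℝ) : (leftDigit α β y : ℝ) < β * y + α := by
  have := Int.ceil_lt_add_one (β * y + α)
  push_cast [leftDigit]; linarith

lemma le_leftDigit_add_one (y : ℝ) : β * y + α ≤ leftDigit α β y + 1 := by
  have := Int.le_ceil (β * y + α)
  push_cast [leftDigit]; linarith

lemma leftT_mem_Ioc (y : ℝ) : leftT α β y ∈ Set.Ioc (0 : ℝ) 1 := by
  have := leftDigit_lt (α := α) (β := β) y
  have := le_leftDigit_add_one (α := α) (β := β) y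
  constructor <;> simp only [leftT] <;> linarith

lemma leftOrbit_mem_Ioc : ∀ n, leftOrbit α β n ∈ Set.Ioc (0 : ℝ) 1
  | 0 => by simp [leftOrbit]
  | n + 1 => by rw [leftOrbit, Function.iterate_succ_apply']; exact leftT_mem_Ioc _

lemma eventually_floor_eq_leftDigit (hβ : 0 < β) (y : ℝ) :
    ∀ᶠ z in 𝓝[<] y, ⌊β * z + α⌋ = leftDigit α β y := by
  have hnear : ∀ᶠ z in 𝓝 y, (leftDigit α β y : ℝ) < β * z + α :=
    ((continuous_const.mul continuous_id).add continuous_const).continuousAt.eventually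
      (lt_mem_nhds (leftDigit_lt y))
  filter_upwards [nhdsWithin_le_nhds hnear, self_mem_nhdsWithin] with z hz hzy
  have hlt : β * z + α < β * y + α := by
    have : β * z < β * y := mul_lt_mul_of_pos_left hzy hβ
    linarith
  rw [Int.floor_eq_iff]
  have := le_leftDigit_add_one (α := α) (β := β) y
  constructor <;> linarith

lemma tendsto_T_nhdsLT (hβ : 0 < β) (y : ℝ) :
    Tendsto (T α β) (𝓝[<] y) (𝓝[<] (leftT α β y)) := by
  have hcont :
      Tendsto (fun z => β * z + α - leftDigit α β y) (𝓝[<] y) (𝓝 (leftT α β y)) :=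
    (((continuous_const.mul continuous_id).add continuous_const).sub
      continuous_const).continuousAt.tendsto.mono_left nhdsWithin_le_nhds
  refine tendsto_nhdsWithin_of_tendsto_nhds_of_eventually_within _ hcont ?_ |>.congr' ?_
  · filter_upwards [self_mem_nhdsWithin] with z (hz : z < y)
    have : β * z < β * y := mul_lt_mul_of_pos_left hz hβ
    simp only [Set.mem_Iio, leftT]
    linarith
  · filter_upwards [eventually_floor_eq_leftDigit (α := α) hβ y] with z hz
    simp [T, hz]

lemma tendsto_iterate_T_nhdsLT (hβ : 0 < β) :
    ∀ n, Tendsto (T α β)^[n] (𝓝[<] 1) (𝓝[<] (leftOrbit α β n))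
  | 0 => tendsto_id
  | n + 1 => by
    rw [Function.iterate_succ', leftOrbit, Function.iterate_succ_apply']
    exact (tendsto_T_nhdsLT hβ _).comp (tendsto_iterate_T_nhdsLT hβ n)

lemma coe_eq_leftDigit (hβ : 0 < β) (hα : 0 ≤ α)
    (hb : Tendsto (iSeq α β) (𝓝[<] (1 : ℝ)) (𝓝 b)) (n : ℕ) :
    (b n : ℤ) = leftDigit α β (leftOrbit α β n) := by
  have hbn : ∀ᶠ x in 𝓝[<] (1 : ℝ), iSeq α β x n = b n := by
    simpa [nhds_discrete] using tendsto_pi_nhds.mp hb n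
  have hfloor := (tendsto_iterate_T_nhdsLT hβ n).eventually
    (eventually_floor_eq_leftDigit (α := α) hβ (leftOrbit α β n))
  have hx : ∀ᶠ x in 𝓝[<] (1 : ℝ), x ∈ Set.Ico (0 : ℝ) 1 :=
    Ico_mem_nhdsLT (by norm_num)
  obtain ⟨x, hxb, hxf, hx⟩ := (hbn.and (hfloor.and hx)).exists
  have h0 : 0 ≤ β * (T α β)^[n] x + α :=
    add_nonneg (mul_nonneg hβ.le (iterate_T_mem_Ico hx n).1) hα
  rw [← hxb, iSeq, digit, Int.toNat_of_nonneg (Int.floor_nonneg.mpr h0), hxf]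

end LeftOrbit

section Digits

variable {α β : ℝ} {b : ℕ → ℕ} {x y z t : ℝ} {d k : ℕ}

lemma coe_digit (h : 0 ≤ β * x + α) : (digit α β x : ℤ) = ⌊β * x + α⌋ :=
  Int.toNat_of_nonneg (Int.floor_nonneg.mpr h)

lemma T_eq_sub_digit (h : 0 ≤ β * x + α) : T α β x = β * x + α - digit α β x := by
  rw [T, ← coe_digit h]; norm_cast

lemma digit_eq_and_T_eq (ht : t ∈ Set.Ico (0 : ℝ) 1) (hy : β * y + α = t + d) :
    digit α β y = d ∧ T α β y = t := by
  have hfl : ⌊β * y + α⌋ = d := by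
    rw [hy, Int.floor_add_natCast, Int.floor_eq_zero_iff.mpr ht, zero_add]
  refine ⟨by simp [digit, hfl], ?_⟩
  rw [T, hfl, hy]; push_cast; ring

lemma one_le_digit (h : 1 ≤ β * x + α) : 1 ≤ digit α β x := by
  have : 1 ≤ ⌊β * x + α⌋ := Int.le_floor.mpr (by exact_mod_cast h)
  simp only [digit]; omega

lemma iterate_T_succ (hβ : 0 ≤ β) (hα : 0 ≤ α) (hy : y ∈ Set.Ico (0 : ℝ) 1) (k : ℕ) :
    (T α β)^[k + 1] y = β * (T α β)^[k] y + α - iSeq α β y k := by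
  rw [Function.iterate_succ_apply', T_eq_sub_digit]
  · rfl
  · exact add_nonneg (mul_nonneg hβ (iterate_T_mem_Ico hy k).1) hα

lemma aSeq_eq_zeroOnes (hβ : 1 < β) (hα : α = 1 / β) : aSeq α β = zeroOnes := by
  have hα0 : 0 ≤ α := by rw [hα]; positivity
  have hα1 : α < 1 := by rw [hα, div_lt_one (by linarith)]; exact hβ
  have hβα : β * α + α = 1 + α := by rw [hα]; field_simp
  have hfl : ⌊α⌋ = 0 := Int.floor_eq_zero_iff.mpr ⟨hα0, hα1⟩
  have hfl' : ⌊1 + α⌋ = 1 := by rw [add_comm, Int.floor_add_one, hfl, zero_add]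
  have hfix : T α β α = α := by simp [T, hβα, hfl']
  funext n
  rcases n with _ | n
  · simp [aSeq, iSeq, digit, zeroOnes, hfl]
  · have h0 : T α β 0 = α := by simp [T, hfl]
    rw [aSeq, iSeq, Function.iterate_succ_apply, h0, Function.iterate_fixed hfix]
    simp [digit, zeroOnes, hβα, hfl']

lemma leftOrbit_succ (hβ : 0 < β) (hα : 0 ≤ α)
    (hb : Tendsto (iSeq α β) (𝓝[<] (1 : ℝ)) (𝓝 b)) (n : ℕ) :
    leftOrbit α β (n + 1) = β * leftOrbit α β n + α - b n := by
  rw [leftOrbit, Function.iterate_succ_apply', ← leftOrbit, leftT,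
    ← coe_eq_leftDigit hβ hα hb]
  norm_cast

lemma iterate_T_lt_leftOrbit (hβ : 0 < β) (hα : 0 ≤ α)
    (hb : Tendsto (iSeq α β) (𝓝[<] (1 : ℝ)) (𝓝 b)) (hy : y ∈ Set.Ico (0 : ℝ) 1) :
    ∀ k, (∀ i < k, iSeq α β y i = b i) → (T α β)^[k] y < leftOrbit α β k
  | 0, _ => by simpa [leftOrbit] using hy.2
  | k + 1, h => by
    have ih := iterate_T_lt_leftOrbit hβ hα hb hy k fun i hi => h i (by omega)
    rw [iterate_T_succ hβ.le hα hy, leftOrbit_succ hβ hα hb, h k (by omega)]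
    have := mul_lt_mul_of_pos_left ih hβ
    linarith

lemma digit_le_of_lt_leftOrbit (hβ : 0 < β) (hα : 0 ≤ α)
    (hb : Tendsto (iSeq α β) (𝓝[<] (1 : ℝ)) (𝓝 b)) (hz : 0 ≤ z)
    (h : z < leftOrbit α β k) : digit α β z ≤ b k := by
  have h0 : 0 ≤ β * z + α := add_nonneg (mul_nonneg hβ.le hz) hα
  have hlt : (⌊β * z + α⌋ : ℝ) < ⌈β * leftOrbit α β k + α⌉ :=
    ((Int.floor_le _).trans_lt (by have := mul_lt_mul_of_pos_left h hβ; linarith)).trans_le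
      (Int.le_ceil _)
  have : (digit α β z : ℤ) ≤ b k := by
    rw [coe_digit h0, coe_eq_leftDigit hβ hα hb, leftDigit]
    have := Int.cast_lt.mp hlt
    omega
  exact_mod_cast this

lemma le_iterate_T_of_zeroOnes (hβ : 1 < β) (hα : α = 1 / β) (hy : y ∈ Set.Ico (0 : ℝ) 1)
    (h : ∀ i < k + 1, iSeq α β y i = zeroOnes i) : α ≤ (T α β)^[k + 1] y := by
  have hα0 : 0 ≤ α := by rw [hα]; positivity
  induction k with
  | zero =>
    rw [iterate_T_succ (by linarith) hα0 hy, h 0 (by omega)]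
    simp [zeroOnes, mul_nonneg (by linarith : (0 : ℝ) ≤ β) hy.1]
  | succ k ih =>
    have ih := mul_le_mul_of_nonneg_left (ih fun i hi => h i (by omega))
      (by linarith : (0 : ℝ) ≤ β)
    have hβα : β * α = 1 := by rw [hα]; field_simp
    have h1 : (iSeq α β y (k + 1) : ℝ) = 1 := by simp [h (k + 1) (by omega), zeroOnes]
    rw [iterate_T_succ (by linarith) hα0 hy, h1]
    linarith

end Digits

def bState (b : ℕ → ℕ) (w : List ℕ) : ℕ :=
  w.foldl (fun r d => if d = b r then r + 1 else 0) 0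

def cylLower (α : ℝ) (w : List ℕ) : ℝ := if kk zeroOnes w = 0 then 0 else α

section Realization

variable {α β : ℝ} {b : ℕ → ℕ} {u w : List ℕ} {d : ℕ} {t : ℝ}

lemma bState_snoc (b : ℕ → ℕ) (u : List ℕ) (d : ℕ) :
    bState b (u ++ [d]) = if d = b (bState b u) then bState b u + 1 else 0 := by
  rw [bState, List.foldl_append]; rfl

lemma pre_bState_suffix (b : ℕ → ℕ) (u : List ℕ) : pre b (bState b u) <:+ u := by
  induction u using List.reverseRecOn with
  | nil => simp [bState]
  | append_singleton u d ih =>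
    rw [bState_snoc]
    split_ifs with h
    · exact pre_succ_suffix_snoc_iff.mpr ⟨ih, h⟩
    · exact List.nil_suffix

lemma cylLower_nonneg (hα : 0 ≤ α) (w : List ℕ) : 0 ≤ cylLower α w := by
  unfold cylLower; split_ifs <;> simp [hα]

lemma lt_mul_leftOrbit_bState (hβ : 0 < β) (hα : 0 ≤ α)
    (hb : Tendsto (iSeq α β) (𝓝[<] (1 : ℝ)) (𝓝 b)) (hd : d ≤ b (bState b u))
    (ht : t < leftOrbit α β (bState b (u ++ [d]))) :
    t + d - α < β * leftOrbit α β (bState b u) := by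
  rw [bState_snoc] at ht
  split_ifs at ht with h
  · rw [leftOrbit_succ hβ hα hb, ← h] at ht
    linarith
  · have ht1 : t < 1 := by simpa [leftOrbit] using ht
    have hdb : (d : ℝ) + 1 ≤ b (bState b u) := by exact_mod_cast (show d + 1 ≤ _ by omega)
    have := leftDigit_lt (α := α) (β := β) (leftOrbit α β (bState b u))
    rw [← coe_eq_leftDigit hβ hα hb] at this
    push_cast at this
    linarith

lemma mul_cylLower_le (hβ : 1 < β) (hα : α = 1 / β) (hd : d = 0 → kk zeroOnes u = 0)
    (ht0 : 0 ≤ t) (ht : cylLower α (u ++ [d]) ≤ t) : β * cylLower α u ≤ t + d - α := by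
  have hα1 : α < 1 := by rw [hα, div_lt_one (by linarith)]; exact hβ
  have hβα : β * α = 1 := by rw [hα]; field_simp
  rcases d with _ | _ | d
  · rw [cylLower, if_neg (kk_zeroOnes_snoc_zero_ne_zero u)] at ht
    rw [cylLower, if_pos (hd rfl)]
    push_cast
    linarith
  · by_cases hu : kk zeroOnes u = 0
    · rw [cylLower, if_pos hu]
      push_cast
      linarith
    · rw [cylLower, if_neg (kk_zeroOnes_snoc_one_pos (Nat.pos_of_ne_zero hu)).ne'] at ht
      rw [cylLower, if_neg hu]
      push_cast
      linarith
  · have : β * cylLower α u ≤ 1 := by unfold cylLower; split_ifs <;> linarith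
    push_cast
    linarith

lemma cylLower_snoc_lt (hβ : 1 < β) (hα : α = 1 / β)
    (hb : Tendsto (iSeq α β) (𝓝[<] (1 : ℝ)) (𝓝 b))
    (hu : cylLower α u < leftOrbit α β (bState b u)) :
    cylLower α (u ++ [d]) < leftOrbit α β (bState b (u ++ [d])) := by
  have hα0 : 0 ≤ α := by rw [hα]; positivity
  have hα1 : α < 1 := by rw [hα, div_lt_one (by linarith)]; exact hβ
  have hβα : β * α = 1 := by rw [hα]; field_simp
  have hpos := (leftOrbit_mem_Ioc (α := α) (β := β) (bState b u)).1
  unfold cylLower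
  split_ifs with hk
  · exact (leftOrbit_mem_Ioc _).1
  rw [bState_snoc]
  split_ifs with h
  · rw [leftOrbit_succ (by linarith) hα0 hb, ← h]
    rcases d with _ | _ | d
    · have := mul_pos (by linarith : (0 : ℝ) < β) hpos
      push_cast
      linarith
    · have hku : kk zeroOnes u ≠ 0 := fun h0 => hk (kk_snoc_eq_zero h0 (by simp [zeroOnes]))
      simp only [cylLower, hku, if_false] at hu
      have := mul_lt_mul_of_pos_left hu (by linarith : (0 : ℝ) < β)
      push_cast
      linarith
    · exact absurd (kk_zeroOnes_snoc_of_two_le (by omega)) hk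
  · simpa [leftOrbit] using hα1

theorem image_cylinder_of_admissible (hβ : 1 < β) (hα : α = 1 / β)
    (hb : Tendsto (iSeq α β) (𝓝[<] (1 : ℝ)) (𝓝 b)) : ∀ w, Admissible b w →
    cylLower α w < leftOrbit α β (bState b w) ∧
    Set.Ico (cylLower α w) (leftOrbit α β (bState b w)) ⊆
      (T α β)^[w.length] ''
        {x | x ∈ Set.Ico (0 : ℝ) 1 ∧ pre (iSeq α β x) w.length = w} := by
  have hβ0 : 0 < β := by linarith
  have hα0 : 0 ≤ α := by rw [hα]; positivity
  intro w
  induction w using List.reverseRecOn with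
  | nil =>
    intro _
    have h0 : cylLower α [] = 0 := by simp [cylLower, kk]
    refine ⟨by simp [h0, bState, leftOrbit], fun t ht => ⟨t, ⟨?_, rfl⟩, rfl⟩⟩
    simpa [h0, bState, leftOrbit] using ht
  | append_singleton u d ih =>
    intro hw
    obtain ⟨hu, hd0, hdb⟩ := admissible_snoc_iff.mp hw
    obtain ⟨hlt, himg⟩ := ih hu
    refine ⟨cylLower_snoc_lt hβ hα hb hlt, fun t ⟨ht0, ht1⟩ => ?_⟩
    have htI : t ∈ Set.Ico (0 : ℝ) 1 :=
      ⟨(cylLower_nonneg hα0 _).trans ht0, ht1.trans_le (leftOrbit_mem_Ioc _).2⟩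
    have hy : β * ((t + d - α) / β) + α = t + d := by field_simp; ring
    have hyI : (t + d - α) / β ∈ Set.Ico (cylLower α u) (leftOrbit α β (bState b u)) :=
      ⟨(le_div_iff₀ hβ0).mpr (by linarith [mul_cylLower_le hβ hα hd0 htI.1 ht0]),
        (div_lt_iff₀ hβ0).mpr (by
          linarith [lt_mul_leftOrbit_bState hβ0 hα0 hb (hdb _ (pre_bState_suffix b u)) ht1])⟩
    obtain ⟨x, ⟨hx, hxu⟩, hxy⟩ := himg hyI
    obtain ⟨hdig, hT⟩ := digit_eq_and_T_eq htI hy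
    refine ⟨x, ⟨hx, ?_⟩, ?_⟩
    · rw [List.length_append, List.length_singleton, pre_succ, hxu]
      simp [iSeq, hxy, hdig]
    · rw [List.length_append, List.length_singleton, Function.iterate_succ_apply', hxy, hT]

end Realization

section Language

variable {α β : ℝ} {b s : ℕ → ℕ} {x : ℝ} {u w : List ℕ} {d k n : ℕ}

lemma exists_digits_of_pre_suffix (hx : x ∈ Set.Ico (0 : ℝ) 1)
    (h : pre s k <:+ pre (iSeq α β x) n) :
    ∃ y ∈ Set.Ico (0 : ℝ) 1,
      (∀ i < k, iSeq α β y i = s i) ∧ iSeq α β x n = iSeq α β y k := by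
  obtain ⟨hkn, hs⟩ := pre_suffix_pre_iff.mp h
  refine ⟨(T α β)^[n - k] x, iterate_T_mem_Ico hx _, fun i hi => ?_, ?_⟩
  · rw [← iSeq_add]; exact hs i hi
  · rw [← iSeq_add, Nat.sub_add_cancel hkn]

lemma eq_pre_of_snoc_prefix (h : u ++ [d] <+: pre s n) :
    u = pre s u.length ∧ d = s u.length := by
  have := List.prefix_iff_eq_take.mp h
  rw [take_pre (by simpa using h.length_le), List.length_append, List.length_singleton,
    pre_succ] at this
  obtain ⟨h1, h2⟩ := List.append_inj' this rfl
  exact ⟨h1, by simpa using h2⟩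

theorem admissible_of_mem_Lang (hβ : 1 < β) (hα : α = 1 / β)
    (hb : Tendsto (iSeq α β) (𝓝[<] (1 : ℝ)) (𝓝 b)) (hw : w ∈ Lang α β) :
    Admissible b w := by
  have hβ0 : 0 < β := by linarith
  have hα0 : 0 ≤ α := by rw [hα]; positivity
  obtain ⟨x, hx, hxw⟩ := mem_Lang_iff.mp hw
  intro u d hud
  rw [← hxw] at hud
  obtain ⟨hu, rfl⟩ := eq_pre_of_snoc_prefix hud
  rw [hu, length_pre]
  refine ⟨fun hd0 => kk_eq_zero_iff.mpr fun k hk hsuf => ?_, fun k hsuf => ?_⟩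
  · obtain ⟨y, hy, hys, hxy⟩ := exists_digits_of_pre_suffix hx hsuf
    obtain ⟨k, rfl⟩ := Nat.exists_eq_add_of_lt hk
    rw [zero_add] at hys hxy
    have hαy := mul_le_mul_of_nonneg_left (le_iterate_T_of_zeroOnes hβ hα hy hys) hβ0.le
    have hβα : β * α = 1 := by rw [hα]; field_simp
    have := one_le_digit (α := α) (β := β) (x := (T α β)^[k + 1] y) (by linarith)
    have : iSeq α β y (k + 1) = 0 := hxy ▸ hd0
    simp only [iSeq] at this
    omega
  · obtain ⟨y, hy, hys, hxy⟩ := exists_digits_of_pre_suffix hx hsuf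
    rw [hxy]
    exact digit_le_of_lt_leftOrbit hβ0 hα0 hb (iterate_T_mem_Ico hy k).1
      (iterate_T_lt_leftOrbit hβ0 hα0 hb hy k hys)

theorem mem_Lang_of_admissible (hβ : 1 < β) (hα : α = 1 / β)
    (hb : Tendsto (iSeq α β) (𝓝[<] (1 : ℝ)) (𝓝 b)) (hw : Admissible b w) :
    w ∈ Lang α β := by
  obtain ⟨hlt, himg⟩ := image_cylinder_of_admissible hβ hα hb w hw
  obtain ⟨x, ⟨hx, hxw⟩, -⟩ := himg ⟨le_rfl, hlt⟩
  exact mem_Lang_iff.mpr ⟨x, hx, hxw⟩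

lemma pre_mem_Lang (hb : Tendsto (iSeq α β) (𝓝[<] (1 : ℝ)) (𝓝 b)) (n : ℕ) :
    pre b n ∈ Lang α β := by
  refine ⟨b, mem_closure_of_tendsto hb ?_, 0, by simp [wordN, pre]⟩
  filter_upwards [Ioo_mem_nhdsLT (show (0 : ℝ) < 1 by norm_num)] with x hx
  exact ⟨x, Set.Ioo_subset_Ico_self hx, rfl⟩

lemma lamNat_eq_b_zero (hβ : 0 < β) (hα : 0 ≤ α)
    (hb : Tendsto (iSeq α β) (𝓝[<] (1 : ℝ)) (𝓝 b)) :
    lamNat α β = b 0 := by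
  have := coe_eq_leftDigit hβ hα hb 0
  simp only [leftDigit, leftOrbit, Function.iterate_zero_apply, mul_one] at this
  rw [lamNat, add_comm, ← this, Int.toNat_natCast]

lemma three_le_b_zero (hβ : 3 < β) (hα : 0 ≤ α)
    (hb : Tendsto (iSeq α β) (𝓝[<] (1 : ℝ)) (𝓝 b)) : 3 ≤ b 0 := by
  have := coe_eq_leftDigit (by linarith) hα hb 0
  simp only [leftDigit, leftOrbit, Function.iterate_zero_apply, mul_one] at this
  have : (3 : ℤ) < ⌈β + α⌉ := Int.lt_ceil.mpr (by push_cast; linarith)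
  omega

end Language

/-- for every word in the language, `w̃ ∈ L^{α,β}` and `s(w̃) = ε`
(equivalently `k1(w̃) = k2(w̃) = 0`). -/
theorem stmt6 (α β : ℝ) (hβ : 3 < β) (hα : α = 1 / β)
    (b : ℕ → ℕ) (hb : Tendsto (iSeq α β) (𝓝[<] (1 : ℝ)) (𝓝 b))
    (w : List ℕ) (hw : w ∈ Lang α β) :
    tildeW (aSeq α β) b (lamNat α β) w ∈ Lang α β ∧
    sWord (aSeq α β) b (tildeW (aSeq α β) b (lamNat α β) w) = [] ∧
    kk (aSeq α β) (tildeW (aSeq α β) b (lamNat α β) w) = 0 ∧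
    kk b (tildeW (aSeq α β) b (lamNat α β) w) = 0 := by
  have hβ1 : 1 < β := by linarith
  have hα0 : 0 ≤ α := by rw [hα]; positivity
  rw [aSeq_eq_zeroOnes hβ1 hα, lamNat_eq_b_zero (by linarith) hα0 hb]
  obtain ⟨hadm, hka, hkb⟩ := tildeW_of_admissible (three_le_b_zero hβ hα0 hb)
    (fun n => admissible_of_mem_Lang hβ1 hα hb (pre_mem_Lang hb n))
    (admissible_of_mem_Lang hβ1 hα hb hw)
  exact ⟨mem_Lang_of_admissible hβ1 hα hb hadm, sWord_eq_nil hka hkb, hka, hkb⟩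

end AB
end
end

section
/- Let A be a finite alphabet, X ⊆ A^ℤ a subshift, and f ∈ B(X) a function of bounded total oscillations. For every ε > 0 there exists N ∈ ℕ such that for all m ≥ N: (1) sup{ ∑_{i=1}^{m} |f(σ^i x) − f(σ^i y)| : x, y ∈ X with x_k = y_k for all k ∈ {1,…,m} } ≤ mε, and (2) sup{ ∑_{j∉{1,…,m}} |f(σ^j x) − f(σ^j y)| : x, y ∈ X with x_k = y_k for all k ∉ {1,…,m} } ≤ mε. -/
open Filter Topology MeasureTheory ENNReal
open scoped Classical

noncomputable section

/-!
Extend `f` to a continuous `g` on the full shift with `∑ δ_k(g) < ∞`. Changing a configuration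
on a set `E` of sites moves `g` by at most `∑_{k ∈ E} δ_k(g)`, so after shifting, both sums are
bounded by `∑_{i ∈ [1,m]} ∑_{j ∉ [1,m]} δ_{±(j-i)}(g)`. This is `o(m)`: apart from the boundedly
many sites near the ends of `[1,m]`, each `i` only sees the tail of a convergent series.
-/

namespace AB

lemma shiftI_shiftI {A : Type*} (i j : ℤ) (x : ℤ → A) :
    shiftI i (shiftI j x) = shiftI (i + j) x :=
  funext fun n => congrArg x (add_assoc n i j)

lemma shiftI_zero {A : Type*} (x : ℤ → A) : shiftI 0 x = x :=
  funext fun n => congrArg x (add_zero n)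

lemma shiftI_mem {A : Type*} {X : Set (ℤ → A)} (hX : ∀ x : ℤ → A, x ∈ X ↔ shiftI 1 x ∈ X)
    {x : ℤ → A} (hx : x ∈ X) (j : ℤ) : shiftI j x ∈ X := by
  have hstep : ∀ j : ℤ, shiftI j x ∈ X ↔ shiftI (j + 1) x ∈ X := fun j => by
    rw [hX, shiftI_shiftI, add_comm]
  induction j using Int.induction_on with
  | zero => rwa [shiftI_zero]
  | succ n ih => exact (hstep n).1 ih
  | pred n ih => exact (hstep _).2 (by rwa [sub_add_cancel])

lemma BTO.exists_continuous_extension {A : Type*} [TopologicalSpace A] {X : Set (ℤ → A)}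
    {f : (ℤ → A) → ℝ} (hf : BTO X f) :
    ∃ g : (ℤ → A) → ℝ, Continuous g ∧ (∀ x ∈ X, g x = f x) ∧ ∑' i, oscE g i ≠ ⊤ := by
  obtain ⟨g, hgc, hgf, hg⟩ :
      ∃ g : (ℤ → A) → ℝ, ∃ _ : Continuous g, ∃ _ : ∀ x ∈ X, g x = f x, enormFull g < ⊤ := by
    simpa only [enormOn, iInf_lt_iff] using lt_top_iff_ne_top.2 hf.2
  exact ⟨g, hgc, hgf, hg.ne⟩

section Oscillation

variable {A : Type*} {g : (ℤ → A) → ℝ}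

lemma ofReal_abs_sub_le_oscE {x y : ℤ → A} {i : ℤ} (h : ∀ k, k ≠ i → x k = y k) :
    ENNReal.ofReal |g x - g y| ≤ oscE g i :=
  le_iSup_of_le x <| le_iSup_of_le y <| le_iSup_of_le h le_rfl

lemma ofReal_abs_sub_le_sum_oscE (s : Finset ℤ) {x y : ℤ → A} (h : ∀ k ∉ s, x k = y k) :
    ENNReal.ofReal |g x - g y| ≤ ∑ k ∈ s, oscE g k := by
  induction s using Finset.induction_on generalizing x with
  | empty =>
    obtain rfl : x = y := funext fun k => h k (Finset.notMem_empty k)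
    simp
  | insert a s ha ih =>
    set z := Function.update x a (y a)
    have hxz : ∀ k, k ≠ a → x k = z k := fun k hk => (Function.update_of_ne hk _ _).symm
    have hzy : ∀ k ∉ s, z k = y k := fun k hk => by
      by_cases hka : k = a
      · subst hka; exact Function.update_self _ _ _
      · simp only [z, Function.update_of_ne hka]; exact h k (by simp [hka, hk])
    calc ENNReal.ofReal |g x - g y|
        ≤ ENNReal.ofReal |g x - g z| + ENNReal.ofReal |g z - g y| :=
          (ENNReal.ofReal_le_ofReal (abs_sub_le _ _ _)).trans ENNReal.ofReal_add_le
      _ ≤ oscE g a + ∑ k ∈ s, oscE g k := add_le_add (ofReal_abs_sub_le_oscE hxz) (ih hzy)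
      _ = ∑ k ∈ insert a s, oscE g k := (Finset.sum_insert ha).symm

variable [TopologicalSpace A]

/- Interpolate between `x` and `y` by the configurations equal to `y` on a finite set `s` and
to `x` elsewhere; these converge to `y` as `s` grows, and each differs from `x` only in `E ∩ s`. -/
lemma ofReal_abs_sub_le_tsum_oscE (hg : Continuous g) (E : Set ℤ) {x y : ℤ → A}
    (h : ∀ k ∉ E, x k = y k) :
    ENNReal.ofReal |g x - g y| ≤ ∑' k : E, oscE g k := by
  have hlim : Tendsto (fun s : Finset ℤ => s.piecewise y x) atTop (𝓝 y) := by
    refine tendsto_pi_nhds.2 fun k => tendsto_const_nhds.congr' ?_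
    filter_upwards [eventually_ge_atTop {k}] with s hs
    exact (s.piecewise_eq_of_mem _ _ (Finset.singleton_subset_iff.1 hs)).symm
  refine le_of_tendsto (ENNReal.tendsto_ofReal
    (tendsto_const_nhds.sub ((hg.tendsto y).comp hlim)).abs) (Eventually.of_forall fun s => ?_)
  have hxs : ∀ k ∉ s.filter (· ∈ E), x k = s.piecewise y x k := fun k hk => by
    by_cases hks : k ∈ s
    · rw [s.piecewise_eq_of_mem _ _ hks]
      exact h k fun hkE => hk (Finset.mem_filter.2 ⟨hks, hkE⟩)
    · rw [s.piecewise_eq_of_notMem _ _ hks]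
  calc ENNReal.ofReal |g x - g (s.piecewise y x)|
      ≤ ∑ k ∈ s.filter (· ∈ E), oscE g k := ofReal_abs_sub_le_sum_oscE _ hxs
    _ = ∑' k : ↑(s.filter (· ∈ E)), oscE g k := (Finset.tsum_subtype _ _).symm
    _ ≤ ∑' k : E, oscE g k :=
        ENNReal.tsum_mono_subtype _ fun k hk => (Finset.mem_filter.1 hk).2

lemma ofReal_abs_sub_shiftI_le (hg : Continuous g) (E : Set ℤ) {x y : ℤ → A}
    (h : ∀ k ∉ E, x k = y k) (i : ℤ) :
    ENNReal.ofReal |g (shiftI i x) - g (shiftI i y)| ≤ ∑' j : E, oscE g (j - i) := by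
  calc ENNReal.ofReal |g (shiftI i x) - g (shiftI i y)|
      ≤ ∑' k : (· + i) ⁻¹' E, oscE g k := ofReal_abs_sub_le_tsum_oscE hg _ fun k hk => h _ hk
    _ = ∑' j : E, oscE g (j - i) := by
        let e : (· + i) ⁻¹' E ≃ E := (Equiv.addRight i).subtypeEquiv fun _ => Iff.rfl
        rw [← e.tsum_eq]
        exact tsum_congr fun k => congrArg (oscE g) (add_sub_cancel_right k.1 i).symm

end Oscillation

section Boundary

variable (h : ℤ → ℝ≥0∞)

lemma tsum_sub_le_tsum_compl_Icc {P : ℤ → Prop} {i : ℤ} {R : ℕ}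
    (hP : ∀ j, P j → j - i ∉ Finset.Icc (-R : ℤ) R) :
    ∑' j : {j // P j}, h (j - i) ≤ ∑' k : {k // k ∉ Finset.Icc (-R : ℤ) R}, h k :=
  ENNReal.tsum_comp_le_tsum_of_injective
    (f := fun j : {j // P j} => (⟨j - i, hP j j.2⟩ : {k // k ∉ Finset.Icc (-R : ℤ) R}))
    (fun _ _ hjk => Subtype.ext (sub_left_inj.1 (congrArg Subtype.val hjk))) (fun k => h k)

lemma tsum_sub_le_tsum (P : ℤ → Prop) (i : ℤ) : ∑' j : {j // P j}, h (j - i) ≤ ∑' k, h k :=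
  ENNReal.tsum_comp_le_tsum_of_injective (f := fun j : {j // P j} => j - i)
    (fun _ _ hjk => Subtype.ext (sub_left_inj.1 hjk)) h

lemma sum_tsum_compl_Icc_le (R m : ℕ) :
    ∑ i ∈ Finset.Icc (1 : ℤ) m, ∑' j : {j : ℤ // j < 1 ∨ (m : ℤ) < j}, h (j - i) ≤
      m * ∑' k : {k // k ∉ Finset.Icc (-R : ℤ) R}, h k + (2 * R : ℕ) * ∑' k, h k := by
  set G := Finset.Icc ((R : ℤ) + 1) (m - R)
  have hG : G ⊆ Finset.Icc (1 : ℤ) m := fun i hi => by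
    simp only [G, Finset.mem_Icc] at hi ⊢; omega
  have hinner : ∀ i ∈ G, ∑' j : {j : ℤ // j < 1 ∨ (m : ℤ) < j}, h (j - i) ≤
      ∑' k : {k // k ∉ Finset.Icc (-R : ℤ) R}, h k := fun i hi =>
    tsum_sub_le_tsum_compl_Icc h fun j hj => by
      simp only [G, Finset.mem_Icc] at hi ⊢; omega
  have hcardG : G.card ≤ m := by simp only [G, Int.card_Icc]; omega
  have hcard : (Finset.Icc (1 : ℤ) m \ G).card ≤ 2 * R := by
    rw [Finset.card_sdiff_of_subset hG]; simp only [G, Int.card_Icc]; omega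
  rw [← Finset.sum_sdiff hG, add_comm]
  gcongr
  · exact (Finset.sum_le_card_nsmul _ _ _ hinner).trans (by rw [nsmul_eq_mul]; gcongr)
  · exact (Finset.sum_le_card_nsmul _ _ _ fun i _ => tsum_sub_le_tsum h _ i).trans
      (by rw [nsmul_eq_mul]; gcongr)

variable {h}

lemma exists_sum_tsum_compl_Icc_le (hh : ∑' k, h k ≠ ⊤) {ε : ℝ} (hε : 0 < ε) :
    ∃ N : ℕ, ∀ m : ℕ, N ≤ m →
      ∑ i ∈ Finset.Icc (1 : ℤ) m, ∑' j : {j : ℤ // j < 1 ∨ (m : ℤ) < j}, h (j - i) ≤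
        ENNReal.ofReal (m * ε) := by
  have hIcc : Tendsto (fun R : ℕ => Finset.Icc (-R : ℤ) R) atTop atTop :=
    tendsto_atTop_finset_of_monotone (fun R R' hRR' => Finset.Icc_subset_Icc (by omega) (by omega))
      fun k => ⟨k.natAbs, Finset.mem_Icc.2 ⟨by omega, by omega⟩⟩
  obtain ⟨R, hR⟩ := (((ENNReal.tendsto_tsum_compl_atTop_zero hh).comp hIcc).eventually
    (eventually_le_nhds (ENNReal.ofReal_pos.2 (half_pos hε)))).exists
  obtain ⟨N, hN⟩ := exists_nat_ge (2 * R * (∑' k, h k).toReal / (ε / 2))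
  refine ⟨N, fun m hm => (sum_tsum_compl_Icc_le h R m).trans ?_⟩
  have hcost : ((2 * R : ℕ) : ℝ≥0∞) * ∑' k, h k ≤ ENNReal.ofReal (m * (ε / 2)) := by
    rw [← ENNReal.ofReal_toReal hh, ← ENNReal.ofReal_natCast, ← ENNReal.ofReal_mul (by positivity)]
    refine ENNReal.ofReal_le_ofReal ?_
    have hRm := (div_le_iff₀ (half_pos hε)).1 (hN.trans (Nat.cast_le.2 hm))
    push_cast
    linarith
  calc (m : ℝ≥0∞) * ∑' k : {k // k ∉ Finset.Icc (-R : ℤ) R}, h k + (2 * R : ℕ) * ∑' k, h k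
      ≤ m * ENNReal.ofReal (ε / 2) + ENNReal.ofReal (m * (ε / 2)) := by gcongr; exact hR
    _ = ENNReal.ofReal (m * ε) := by
        rw [← ENNReal.ofReal_natCast, ← ENNReal.ofReal_mul (by positivity),
          ← ENNReal.ofReal_add (by positivity) (by positivity)]
        ring_nf

end Boundary

theorem stmt12_general (A : Type*) [TopologicalSpace A]
    (X : Set (ℤ → A))
    (hXinv : ∀ x : ℤ → A, x ∈ X ↔ shiftI 1 x ∈ X)
    (f : (ℤ → A) → ℝ) (hf : BTO X f)
    (ε : ℝ) (hε : 0 < ε) :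
    ∃ N : ℕ, ∀ m : ℕ, N ≤ m →
      (∀ x ∈ X, ∀ y ∈ X, (∀ k : ℤ, 1 ≤ k → k ≤ (m : ℤ) → x k = y k) →
        ∑ i ∈ Finset.Icc (1 : ℤ) (m : ℤ),
          |f (shiftI i x) - f (shiftI i y)| ≤ m * ε) ∧
      (∀ x ∈ X, ∀ y ∈ X, (∀ k : ℤ, k < 1 ∨ (m : ℤ) < k → x k = y k) →
        ∑' j : {j : ℤ // j < 1 ∨ (m : ℤ) < j},
          ENNReal.ofReal |f (shiftI j.1 x) - f (shiftI j.1 y)| ≤ ENNReal.ofReal (m * ε)) := by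
  obtain ⟨g, hgc, hgf, hg⟩ := hf.exists_continuous_extension
  have hfg : ∀ x ∈ X, ∀ j, f (shiftI j x) = g (shiftI j x) := fun x hx j =>
    (hgf _ (shiftI_mem hXinv hx j)).symm
  obtain ⟨N₁, hN₁⟩ := exists_sum_tsum_compl_Icc_le hg hε
  obtain ⟨N₂, hN₂⟩ := exists_sum_tsum_compl_Icc_le (h := fun k => oscE g (-k))
    (((Equiv.neg ℤ).tsum_eq (oscE g)).trans_ne hg) hε
  refine ⟨max N₁ N₂, fun m hm => ⟨fun x hx y hy hxy => ?_, fun x hx y hy hxy => ?_⟩⟩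
  · rw [← ENNReal.ofReal_le_ofReal_iff (by positivity),
      ENNReal.ofReal_sum_of_nonneg fun _ _ => abs_nonneg _]
    refine (Finset.sum_le_sum fun i _ => ?_).trans (hN₁ m (le_of_max_le_left hm))
    rw [hfg x hx, hfg y hy]
    exact ofReal_abs_sub_shiftI_le hgc {j | j < 1 ∨ (m : ℤ) < j}
      (fun k hk => hxy k (not_lt.1 (not_or.1 hk).1) (not_lt.1 (not_or.1 hk).2)) i
  · calc ∑' j : {j : ℤ // j < 1 ∨ (m : ℤ) < j},
          ENNReal.ofReal |f (shiftI j.1 x) - f (shiftI j.1 y)|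
        ≤ ∑' j : {j : ℤ // j < 1 ∨ (m : ℤ) < j},
            ∑ l ∈ Finset.Icc (1 : ℤ) m, oscE g (-(j - l)) := ENNReal.tsum_le_tsum fun j => by
          rw [hfg x hx, hfg y hy]
          refine (ofReal_abs_sub_shiftI_le hgc ↑(Finset.Icc (1 : ℤ) m)
            (fun k hk => hxy k (by simp at hk; omega)) j).trans_eq ?_
          exact (Finset.tsum_subtype _ fun l => oscE g (l - j)).trans
            (Finset.sum_congr rfl fun l _ => by rw [neg_sub])
      _ = ∑ l ∈ Finset.Icc (1 : ℤ) m,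
            ∑' j : {j : ℤ // j < 1 ∨ (m : ℤ) < j}, oscE g (-(j - l)) :=
          Summable.tsum_finsetSum fun _ _ => ENNReal.summable
      _ ≤ ENNReal.ofReal (m * ε) := hN₂ m (le_of_max_le_right hm)

/-- uniform smallness estimates for functions of bounded total oscillations
on a subshift over a finite alphabet. -/
theorem stmt12 (A : Type*) [Fintype A] [TopologicalSpace A] [DiscreteTopology A]
    (X : Set (ℤ → A)) (hXcl : IsClosed X)
    (hXinv : ∀ x : ℤ → A, x ∈ X ↔ shiftI 1 x ∈ X)
    (f : (ℤ → A) → ℝ) (hf : BTO X f)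
    (ε : ℝ) (hε : 0 < ε) :
    ∃ N : ℕ, ∀ m : ℕ, N ≤ m →
      (∀ x ∈ X, ∀ y ∈ X, (∀ k : ℤ, 1 ≤ k → k ≤ (m : ℤ) → x k = y k) →
        ∑ i ∈ Finset.Icc (1 : ℤ) (m : ℤ),
          |f (shiftI i x) - f (shiftI i y)| ≤ m * ε) ∧
      (∀ x ∈ X, ∀ y ∈ X, (∀ k : ℤ, k < 1 ∨ (m : ℤ) < k → x k = y k) →
        ∑' j : {j : ℤ // j < 1 ∨ (m : ℤ) < j},
          ENNReal.ofReal |f (shiftI j.1 x) - f (shiftI j.1 y)| ≤ ENNReal.ofReal (m * ε)) :=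
  stmt12_general A X hXinv f hf ε hε

end AB
end
end
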